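/- arXiv:2406.09769 — 4 statements merged into one kernel-verified Lean document; each statement's English description precedes it below -/
import Mathlib

section
/- Kendall-Tau decomposition under concatenation: let C = C₁ ∪ C₂ be a disjoint union of finite sets, let τ be an ordering of C, and let τ₁, τ₂ denote the restrictions of τ to C₁ and C₂ (i.e., the induced relative orderings). Then for any orderings σ₁ of C₁ and σ₂ of C₂, d_KT(τ, σ₁⊕σ₂) = d_KT(τ, τ₁⊕τ₂) + d_KT(τ₁, σ₁) + d_KT(τ₂, σ₂), where σ₁⊕σ₂ denotes the concatenated ordering placing all of C₁ (in order σ₁) before all of C₂ (in order σ₂). -/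
/-- The Kendall-Tau distance between two orderings of a finite set `S`:
the number of unordered pairs of distinct elements ordered differently. -/
def kt {S : Type*} [Fintype S] {n : ℕ} (σ τ : S ≃ Fin n) : ℕ :=
  (Finset.univ.filter fun p : S × S => σ p.1 < σ p.2 ∧ τ p.2 < τ p.1).card

/-- Concatenation of an ordering of `S₁` and an ordering of `S₂`: all of `S₁`
(in order `σ₁`) comes before all of `S₂` (in order `σ₂`). -/
def concatOrd {S₁ S₂ : Type*} {n₁ n₂ : ℕ} (σ₁ : S₁ ≃ Fin n₁) (σ₂ : S₂ ≃ Fin n₂) :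
    S₁ ⊕ S₂ ≃ Fin (n₁ + n₂) :=
  (Equiv.sumCongr σ₁ σ₂).trans finSumFinEquiv

lemma kt_as_sum {S : Type*} [Fintype S] {n : ℕ} (σ τ : S ≃ Fin n) :
    kt σ τ = ∑ a : S, ∑ b : S, if σ a < σ b ∧ τ b < τ a then 1 else 0 := by
  rw [kt, Finset.card_filter, ← Finset.univ_product_univ, Finset.sum_product]

lemma concat_decomp {S₁ S₂ : Type*} [Fintype S₁] [Fintype S₂] {n₁ n₂ : ℕ}
    (τ : S₁ ⊕ S₂ ≃ Fin (n₁ + n₂)) (ρ₁ : S₁ ≃ Fin n₁) (ρ₂ : S₂ ≃ Fin n₂) :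
    kt (concatOrd ρ₁ ρ₂) τ =
      (∑ a : S₁, ∑ b : S₂, if τ (Sum.inr b) < τ (Sum.inl a) then 1 else 0)
      + (∑ a : S₁, ∑ b : S₁, if ρ₁ a < ρ₁ b ∧ τ (Sum.inl b) < τ (Sum.inl a) then 1 else 0)
      + (∑ a : S₂, ∑ b : S₂, if ρ₂ a < ρ₂ b ∧ τ (Sum.inr b) < τ (Sum.inr a) then 1 else 0) := by
  rw [kt_as_sum]
  rw [Fintype.sum_sum_type]
  have hll : ∀ (a b : S₁),
      concatOrd ρ₁ ρ₂ (Sum.inl a) < concatOrd ρ₁ ρ₂ (Sum.inl b) ↔ ρ₁ a < ρ₁ b := by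
    intro a b
    simp only [concatOrd, Equiv.trans_apply, Equiv.sumCongr_apply, Sum.map_inl,
      finSumFinEquiv_apply_left, Fin.lt_def, Fin.coe_castAdd]
  have hlr : ∀ (a : S₁) (b : S₂),
      concatOrd ρ₁ ρ₂ (Sum.inl a) < concatOrd ρ₁ ρ₂ (Sum.inr b) := by
    intro a b
    have := (ρ₁ a).isLt
    simp only [concatOrd, Equiv.trans_apply, Equiv.sumCongr_apply, Sum.map_inl, Sum.map_inr,
      finSumFinEquiv_apply_left, finSumFinEquiv_apply_right, Fin.lt_def, Fin.coe_castAdd,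
      Fin.coe_natAdd]
    omega
  have hrl : ∀ (a : S₂) (b : S₁),
      ¬ concatOrd ρ₁ ρ₂ (Sum.inr a) < concatOrd ρ₁ ρ₂ (Sum.inl b) := by
    intro a b
    have := (ρ₁ b).isLt
    simp only [concatOrd, Equiv.trans_apply, Equiv.sumCongr_apply, Sum.map_inl, Sum.map_inr,
      finSumFinEquiv_apply_left, finSumFinEquiv_apply_right, Fin.lt_def, Fin.coe_castAdd,
      Fin.coe_natAdd]
    omega
  have hrr : ∀ (a b : S₂),
      concatOrd ρ₁ ρ₂ (Sum.inr a) < concatOrd ρ₁ ρ₂ (Sum.inr b) ↔ ρ₂ a < ρ₂ b := by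
    intro a b
    simp only [concatOrd, Equiv.trans_apply, Equiv.sumCongr_apply, Sum.map_inr,
      finSumFinEquiv_apply_right, Fin.lt_def, Fin.coe_natAdd, add_lt_add_iff_left]
  simp only [Fintype.sum_sum_type, hll, hlr, hrl, hrr, true_and, false_and, if_false,
    Finset.sum_const_zero, Finset.sum_add_distrib]
  ring

lemma swapkt {S : Type*} [Fintype S] {n : ℕ} (σ ρ : S ≃ Fin n) :
    kt σ ρ = kt ρ σ := by
  rw [kt_as_sum, kt_as_sum, Finset.sum_comm]
  simp [and_comm]

/-- Kendall-Tau decomposition under concatenation.  Here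
`τ₁`, `τ₂` are the restrictions of `τ` to `C₁`, `C₂`, characterized by
preserving the relative order induced by `τ`. -/
theorem kendall_tau_concat_decomposition {S₁ S₂ : Type*} [Fintype S₁] [Fintype S₂]
    (τ : S₁ ⊕ S₂ ≃ Fin (Fintype.card S₁ + Fintype.card S₂))
    (τ₁ : S₁ ≃ Fin (Fintype.card S₁)) (τ₂ : S₂ ≃ Fin (Fintype.card S₂))
    (hτ₁ : ∀ c c' : S₁, τ₁ c < τ₁ c' ↔ τ (Sum.inl c) < τ (Sum.inl c'))
    (hτ₂ : ∀ c c' : S₂, τ₂ c < τ₂ c' ↔ τ (Sum.inr c) < τ (Sum.inr c'))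
    (σ₁ : S₁ ≃ Fin (Fintype.card S₁)) (σ₂ : S₂ ≃ Fin (Fintype.card S₂)) :
    kt τ (concatOrd σ₁ σ₂)
      = kt τ (concatOrd τ₁ τ₂) + kt τ₁ σ₁ + kt τ₂ σ₂ := by
  rw [swapkt τ (concatOrd σ₁ σ₂), swapkt τ (concatOrd τ₁ τ₂), concat_decomp, concat_decomp,
    kt_as_sum τ₁ σ₁, kt_as_sum τ₂ σ₂]
  have e1 : (∑ a : S₁, ∑ b : S₁, if τ₁ a < τ₁ b ∧ τ (Sum.inl b) < τ (Sum.inl a) then 1 else 0)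
      = 0 := by
    apply Finset.sum_eq_zero; intro a _
    apply Finset.sum_eq_zero; intro b _
    simp only [← hτ₁, ite_eq_right_iff, and_imp]
    intro h1 h2; exact absurd (h1.trans h2) (lt_irrefl _)
  have e2 : (∑ a : S₂, ∑ b : S₂, if τ₂ a < τ₂ b ∧ τ (Sum.inr b) < τ (Sum.inr a) then 1 else 0)
      = 0 := by
    apply Finset.sum_eq_zero; intro a _
    apply Finset.sum_eq_zero; intro b _
    simp only [← hτ₂, ite_eq_right_iff, and_imp]
    intro h1 h2; exact absurd (h1.trans h2) (lt_irrefl _)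
  have e3 : (∑ a : S₁, ∑ b : S₁, if σ₁ a < σ₁ b ∧ τ (Sum.inl b) < τ (Sum.inl a) then 1 else 0)
      = ∑ a : S₁, ∑ b : S₁, if τ₁ a < τ₁ b ∧ σ₁ b < σ₁ a then 1 else 0 := by
    rw [Finset.sum_comm]
    simp [← hτ₁, and_comm]
  have e4 : (∑ a : S₂, ∑ b : S₂, if σ₂ a < σ₂ b ∧ τ (Sum.inr b) < τ (Sum.inr a) then 1 else 0)
      = ∑ a : S₂, ∑ b : S₂, if τ₂ a < τ₂ b ∧ σ₂ b < σ₂ a then 1 else 0 := by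
    rw [Finset.sum_comm]
    simp [← hτ₂, and_comm]
  rw [e1, e2, e3, e4]
  ring
end

section
/- Optimality of block concatenation for Kendall-Tau minimization: let C = C₁ ∪ C₂ be a disjoint union of finite sets and let τ be an ordering of C with restrictions τ₁, τ₂ to C₁, C₂. Among all orderings of C in which every element of one block precedes every element of the other block (i.e., orderings of the form σ₁⊕σ₂ or σ₂⊕σ₁ for arbitrary orderings σᵢ of Cᵢ), the minimum of d_KT(·, τ) is attained at either τ₁⊕τ₂ or τ₂⊕τ₁, and the minimum value equals min(d_KT(τ₁⊕τ₂, τ), d_KT(τ₂⊕τ₁, τ)). -/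
/-- Reversed concatenation: all of `S₂` (in order `σ₂`) comes before all of
`S₁` (in order `σ₁`), as an ordering of `S₁ ⊕ S₂`. -/
def revConcatOrd {S₁ S₂ : Type*} {n₁ n₂ : ℕ} (σ₂ : S₂ ≃ Fin n₂) (σ₁ : S₁ ≃ Fin n₁) :
    S₁ ⊕ S₂ ≃ Fin (n₁ + n₂) :=
  (Equiv.sumComm S₁ S₂).trans
    (((Equiv.sumCongr σ₂ σ₁).trans finSumFinEquiv).trans (finCongr (Nat.add_comm n₂ n₁)))

lemma concat_inl {S₁ S₂ : Type*} {n₁ n₂ : ℕ} (σ₁ : S₁ ≃ Fin n₁) (σ₂ : S₂ ≃ Fin n₂) (a : S₁) :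
    ((concatOrd σ₁ σ₂ (Sum.inl a) : Fin (n₁+n₂)) : ℕ) = σ₁ a := by
  simp [concatOrd]

lemma concat_inr {S₁ S₂ : Type*} {n₁ n₂ : ℕ} (σ₁ : S₁ ≃ Fin n₁) (σ₂ : S₂ ≃ Fin n₂) (b : S₂) :
    ((concatOrd σ₁ σ₂ (Sum.inr b) : Fin (n₁+n₂)) : ℕ) = n₁ + σ₂ b := by
  simp [concatOrd]

lemma rev_inl {S₁ S₂ : Type*} {n₁ n₂ : ℕ} (σ₂ : S₂ ≃ Fin n₂) (σ₁ : S₁ ≃ Fin n₁) (a : S₁) :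
    ((revConcatOrd σ₂ σ₁ (Sum.inl a) : Fin (n₁+n₂)) : ℕ) = n₂ + σ₁ a := by
  simp [revConcatOrd]; omega

lemma rev_inr {S₁ S₂ : Type*} {n₁ n₂ : ℕ} (σ₂ : S₂ ≃ Fin n₂) (σ₁ : S₁ ≃ Fin n₁) (b : S₂) :
    ((revConcatOrd σ₂ σ₁ (Sum.inr b) : Fin (n₁+n₂)) : ℕ) = σ₂ b := by
  simp [revConcatOrd]

lemma concat_min {S₁ S₂ : Type*} [Fintype S₁] [Fintype S₂]
    (τ : S₁ ⊕ S₂ ≃ Fin (Fintype.card S₁ + Fintype.card S₂))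
    (τ₁ σ₁ : S₁ ≃ Fin (Fintype.card S₁)) (τ₂ σ₂ : S₂ ≃ Fin (Fintype.card S₂))
    (hτ₁ : ∀ c c' : S₁, τ₁ c < τ₁ c' ↔ τ (Sum.inl c) < τ (Sum.inl c'))
    (hτ₂ : ∀ c c' : S₂, τ₂ c < τ₂ c' ↔ τ (Sum.inr c) < τ (Sum.inr c')) :
    kt (concatOrd τ₁ τ₂) τ ≤ kt (concatOrd σ₁ σ₂) τ := by
  apply Finset.card_le_card
  intro p hp
  simp only [Finset.mem_filter, Finset.mem_univ, true_and] at hp ⊢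
  obtain ⟨h1, h2⟩ := hp
  refine ⟨?_, h2⟩
  rw [Fin.lt_def] at h1 ⊢
  obtain ⟨x, y⟩ := p
  rcases x with a | a <;> rcases y with b | b <;>
    simp only [concat_inl, concat_inr] at h1 ⊢
  · exfalso
    have : τ₁ a < τ₁ b := by rw [Fin.lt_def]; exact h1
    exact absurd ((hτ₁ a b).mp this) (not_lt.mpr (le_of_lt h2))
  · have := (σ₁ a).isLt; omega
  · have := (τ₂ a).isLt; omega
  · exfalso
    have : τ₂ a < τ₂ b := by rw [Fin.lt_def]; omega
    exact absurd ((hτ₂ a b).mp this) (not_lt.mpr (le_of_lt h2))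

lemma rev_min {S₁ S₂ : Type*} [Fintype S₁] [Fintype S₂]
    (τ : S₁ ⊕ S₂ ≃ Fin (Fintype.card S₁ + Fintype.card S₂))
    (τ₁ σ₁ : S₁ ≃ Fin (Fintype.card S₁)) (τ₂ σ₂ : S₂ ≃ Fin (Fintype.card S₂))
    (hτ₁ : ∀ c c' : S₁, τ₁ c < τ₁ c' ↔ τ (Sum.inl c) < τ (Sum.inl c'))
    (hτ₂ : ∀ c c' : S₂, τ₂ c < τ₂ c' ↔ τ (Sum.inr c) < τ (Sum.inr c')) :
    kt (revConcatOrd τ₂ τ₁) τ ≤ kt (revConcatOrd σ₂ σ₁) τ := by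
  apply Finset.card_le_card
  intro p hp
  simp only [Finset.mem_filter, Finset.mem_univ, true_and] at hp ⊢
  obtain ⟨h1, h2⟩ := hp
  refine ⟨?_, h2⟩
  rw [Fin.lt_def] at h1 ⊢
  obtain ⟨x, y⟩ := p
  rcases x with a | a <;> rcases y with b | b <;>
    simp only [rev_inl, rev_inr] at h1 ⊢
  · exfalso
    have : τ₁ a < τ₁ b := by rw [Fin.lt_def]; omega
    exact absurd ((hτ₁ a b).mp this) (not_lt.mpr (le_of_lt h2))
  · have := (τ₁ a).isLt; omega
  · have := (σ₂ a).isLt; omega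
  · exfalso
    have : τ₂ a < τ₂ b := by rw [Fin.lt_def]; exact h1
    exact absurd ((hτ₂ a b).mp this) (not_lt.mpr (le_of_lt h2))

/-- among all orderings of `C = C₁ ⊔ C₂` in which one block
entirely precedes the other, the minimum Kendall-Tau distance to `τ` is
attained at `τ₁ ⊕ τ₂` or `τ₂ ⊕ τ₁` (the restrictions of `τ`), and equals
`min (d_KT(τ₁⊕τ₂, τ)) (d_KT(τ₂⊕τ₁, τ))`. -/
theorem kendall_tau_block_concat_optimal {S₁ S₂ : Type*} [Fintype S₁] [Fintype S₂]
    (τ : S₁ ⊕ S₂ ≃ Fin (Fintype.card S₁ + Fintype.card S₂))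
    (τ₁ : S₁ ≃ Fin (Fintype.card S₁)) (τ₂ : S₂ ≃ Fin (Fintype.card S₂))
    (hτ₁ : ∀ c c' : S₁, τ₁ c < τ₁ c' ↔ τ (Sum.inl c) < τ (Sum.inl c'))
    (hτ₂ : ∀ c c' : S₂, τ₂ c < τ₂ c' ↔ τ (Sum.inr c) < τ (Sum.inr c')) :
    IsLeast {d : ℕ | ∃ (σ₁ : S₁ ≃ Fin (Fintype.card S₁))
        (σ₂ : S₂ ≃ Fin (Fintype.card S₂)),
        d = kt (concatOrd σ₁ σ₂) τ ∨ d = kt (revConcatOrd σ₂ σ₁) τ}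
      (min (kt (concatOrd τ₁ τ₂) τ) (kt (revConcatOrd τ₂ τ₁) τ)) := by
  constructor
  · rcases le_total (kt (concatOrd τ₁ τ₂) τ) (kt (revConcatOrd τ₂ τ₁) τ) with h | h
    · exact ⟨τ₁, τ₂, Or.inl (min_eq_left h)⟩
    · exact ⟨τ₁, τ₂, Or.inr (min_eq_right h)⟩
  · rintro d ⟨σ₁, σ₂, rfl | rfl⟩
    · exact le_trans (min_le_left _ _) (concat_min τ τ₁ σ₁ τ₂ σ₂ hτ₁ hτ₂)
    · exact le_trans (min_le_right _ _) (rev_min τ τ₁ σ₁ τ₂ σ₂ hτ₁ hτ₂)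
end

section
/- Tensor network representation of the Ising partition function: let G = (V,E) be a finite simple graph, β ≥ 0, and let W be the 2×2 matrix W = (1/√2)[[√(cosh β)+√(sinh β), √(cosh β)−√(sinh β)],[√(cosh β)−√(sinh β), √(cosh β)+√(sinh β)]]. For each vertex v define a tensor t^{(v)} indexed by assignments of values in {0,1} to the edges E(v) incident to v, via t^{(v)}(j) = Σ_{i∈{0,1}} Π_{e∈E(v)} W_{i, j(e)}. Then Σ_{j : E → {0,1}} Π_{v∈V} t^{(v)}(j restricted to E(v)) = Σ_{σ : V → {−1,+1}} Π_{(u,v)∈E} exp(β σ(u) σ(v)), i.e., the full contraction of the tensor network equals the Ising partition function Z. -/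
open Matrix Finset

open scoped Classical

/-- tensor network representation of the Ising partition function.
The graph is given by a finite vertex type `V` and a finite set `E` of
non-diagonal unordered pairs (edges).  The vertex tensor at `v`, evaluated on
an assignment `j` of values in `Fin 2` to the edges, is
`t⁽ᵛ⁾(j) = Σ_{i} Π_{e ∋ v} W i (j e)`, and the full contraction over all edge
assignments equals the Ising partition function
`Z = Σ_{σ : V → {±1}} Π_{(u,v) ∈ E} exp (β σ(u) σ(v))`
(spins encoded by `Bool`, with `true ↦ +1`, `false ↦ -1`). -/
theorem ising_tensor_network_contraction {V : Type*} [Fintype V] [DecidableEq V]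
    (E : Finset (Sym2 V)) (hE : ∀ e ∈ E, ¬ e.IsDiag)
    (β : ℝ) (hβ : 0 ≤ β)
    (W : Matrix (Fin 2) (Fin 2) ℝ)
    (hW : W = (1 / Real.sqrt 2) •
      !![Real.sqrt (Real.cosh β) + Real.sqrt (Real.sinh β),
         Real.sqrt (Real.cosh β) - Real.sqrt (Real.sinh β);
         Real.sqrt (Real.cosh β) - Real.sqrt (Real.sinh β),
         Real.sqrt (Real.cosh β) + Real.sqrt (Real.sinh β)]) :
    (∑ j : {e : Sym2 V // e ∈ E} → Fin 2, ∏ v : V,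
        ∑ i : Fin 2,
          ∏ e ∈ Finset.univ.filter (fun e : {e : Sym2 V // e ∈ E} => v ∈ (e : Sym2 V)),
            W i (j e))
      = ∑ σ : V → Bool, ∏ e : {e : Sym2 V // e ∈ E},
          Sym2.lift ⟨fun x y => Real.exp (β * (if σ x then (1 : ℝ) else -1) *
              (if σ y then (1 : ℝ) else -1)),
            fun x y => by dsimp only; rw [mul_right_comm]⟩ (e : Sym2 V) := by
  classical
  have key : ∀ a b : Fin 2, (∑ k : Fin 2, W a k * W b k) =
      Real.exp (β * (if a = 1 then (1:ℝ) else -1) * (if b = 1 then (1:ℝ) else -1)) := by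
    have hc : Real.sqrt (Real.cosh β) ^ 2 = Real.cosh β := Real.sq_sqrt (Real.cosh_pos β).le
    have hs : Real.sqrt (Real.sinh β) ^ 2 = Real.sinh β :=
      Real.sq_sqrt (Real.sinh_nonneg_iff.mpr hβ)
    have h2 : Real.sqrt 2 ^ 2 = 2 := Real.sq_sqrt (by norm_num)
    have h2' : Real.sqrt 2 ≠ 0 := by positivity
    have he1 : Real.cosh β + Real.sinh β = Real.exp β := Real.cosh_add_sinh β
    have he2 : Real.cosh β - Real.sinh β = Real.exp (-β) := Real.cosh_sub_sinh β
    intro a b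
    fin_cases a <;> fin_cases b <;>
      simp only [hW, Fin.sum_univ_two, Matrix.smul_apply, smul_eq_mul, Matrix.cons_val_zero,
        Matrix.cons_val_one, Matrix.head_cons, Matrix.cons_val', Matrix.head_fin_const,
        Matrix.empty_val', Matrix.cons_val_fin_one, Fin.mk_one, Fin.zero_eta, if_true,
        if_false] <;>
      norm_num <;>
      [ (rw [← he1]; field_simp; nlinarith [hc, hs, h2]);
        (rw [← he2]; field_simp; nlinarith [hc, hs, h2]);
        (rw [← he2]; field_simp; nlinarith [hc, hs, h2]);
        (rw [← he1]; field_simp; nlinarith [hc, hs, h2])]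
  -- common middle form
  have hA : (∑ j : {e : Sym2 V // e ∈ E} → Fin 2, ∏ v : V,
        ∑ i : Fin 2,
          ∏ e ∈ Finset.univ.filter (fun e : {e : Sym2 V // e ∈ E} => v ∈ (e : Sym2 V)),
            W i (j e))
      = ∑ τ : V → Fin 2, ∏ e : {e : Sym2 V // e ∈ E},
          ∑ k : Fin 2, ∏ v ∈ Finset.univ.filter (fun v : V => v ∈ (e : Sym2 V)), W (τ v) k := by
    calc (∑ j : {e : Sym2 V // e ∈ E} → Fin 2, ∏ v : V,
        ∑ i : Fin 2,
          ∏ e ∈ Finset.univ.filter (fun e : {e : Sym2 V // e ∈ E} => v ∈ (e : Sym2 V)),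
            W i (j e))
        = ∑ j : {e : Sym2 V // e ∈ E} → Fin 2, ∑ τ : V → Fin 2, ∏ v : V,
            ∏ e ∈ Finset.univ.filter (fun e : {e : Sym2 V // e ∈ E} => v ∈ (e : Sym2 V)),
              W (τ v) (j e) := by
          refine Finset.sum_congr rfl fun j _ => ?_
          rw [Finset.prod_univ_sum, Fintype.piFinset_univ]
      _ = ∑ τ : V → Fin 2, ∑ j : {e : Sym2 V // e ∈ E} → Fin 2, ∏ v : V,
            ∏ e ∈ Finset.univ.filter (fun e : {e : Sym2 V // e ∈ E} => v ∈ (e : Sym2 V)),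
              W (τ v) (j e) := Finset.sum_comm
      _ = ∑ τ : V → Fin 2, ∑ j : {e : Sym2 V // e ∈ E} → Fin 2,
            ∏ e : {e : Sym2 V // e ∈ E},
              ∏ v ∈ Finset.univ.filter (fun v : V => v ∈ (e : Sym2 V)), W (τ v) (j e) := by
          refine Finset.sum_congr rfl fun τ _ => Finset.sum_congr rfl fun j _ => ?_
          simp only [Finset.prod_filter]
          exact Finset.prod_comm
      _ = ∑ τ : V → Fin 2, ∏ e : {e : Sym2 V // e ∈ E},
            ∑ k : Fin 2,
              ∏ v ∈ Finset.univ.filter (fun v : V => v ∈ (e : Sym2 V)), W (τ v) k := by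
          refine Finset.sum_congr rfl fun τ _ => ?_
          rw [Finset.prod_univ_sum, Fintype.piFinset_univ]
  rw [hA]
  -- reindex Bool side
  rw [← Equiv.sum_comp (Equiv.piCongrRight fun _ : V => finTwoEquiv)]
  refine Finset.sum_congr rfl fun τ _ => Finset.prod_congr rfl fun e _ => ?_
  obtain ⟨e, he⟩ := e
  have hne : ¬ e.IsDiag := hE e he
  induction e using Sym2.ind with
  | _ x y =>
    have hxy : x ≠ y := fun h => hne (Sym2.mk_isDiag_iff.mpr h)
    have hfil : Finset.univ.filter (fun v : V => v ∈ (s(x, y) : Sym2 V)) = {x, y} := by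
      ext v
      simp [Sym2.mem_iff, Finset.mem_insert]
    have hsg : ∀ i : Fin 2, (if finTwoEquiv i = true then (1:ℝ) else -1) =
        (if i = 1 then (1:ℝ) else -1) := by
      intro i; fin_cases i <;> simp [finTwoEquiv]
    calc (∑ k : Fin 2, ∏ v ∈ Finset.univ.filter
            (fun v : V => v ∈ ((⟨s(x, y), he⟩ : {e : Sym2 V // e ∈ E}) : Sym2 V)), W (τ v) k)
        = ∑ k : Fin 2, W (τ x) k * W (τ y) k := by
          rw [show ((⟨s(x, y), he⟩ : {e : Sym2 V // e ∈ E}) : Sym2 V) = s(x, y) from rfl, hfil]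
          exact Finset.sum_congr rfl fun k _ => Finset.prod_pair hxy
      _ = Real.exp (β * (if τ x = 1 then (1:ℝ) else -1) * (if τ y = 1 then (1:ℝ) else -1)) :=
          key (τ x) (τ y)
      _ = _ := by
          rw [show ((⟨s(x, y), he⟩ : {e : Sym2 V // e ∈ E}) : Sym2 V) = s(x, y) from rfl,
            Sym2.lift_mk]
          simp only [Equiv.piCongrRight_apply, Pi.map_apply]
          rw [hsg (τ x), hsg (τ y)]
end

section
/- Eckart–Young for orthogonal projection onto column subspaces: let C ∈ ℝ^{m×n} and 1 ≤ r ≤ n. Over all V ∈ ℝ^{n×r} with VᵀV = I_r, the quantity ‖C − C V Vᵀ‖_F is minimized when the columns of V are right singular vectors of C corresponding to its r largest singular values, and the minimum value equals the square root of the sum of the squares of the remaining singular values of C. -/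
open Matrix Finset

/-- The Frobenius norm of a real matrix. -/
noncomputable def frob {m n : ℕ} (A : Matrix (Fin m) (Fin n) ℝ) : ℝ :=
  Real.sqrt (∑ i, ∑ j, (A i j) ^ 2)

lemma sumsq_eq_trace {m n : ℕ} (A : Matrix (Fin m) (Fin n) ℝ) :
    ∑ i, ∑ j, (A i j)^2 = Matrix.trace (Aᵀ * A) := by
  rw [Finset.sum_comm]
  simp [Matrix.trace, Matrix.mul_apply, Matrix.diag, sq]

lemma trace_diag_mul {n : ℕ} (μ : Fin n → ℝ) (M : Matrix (Fin n) (Fin n) ℝ) :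
    Matrix.trace (Matrix.diagonal μ * M) = ∑ i, μ i * M i i := by
  simp [Matrix.trace, Matrix.diag, Matrix.mul_apply, Matrix.diagonal]

lemma proj_diag_nonneg {n r : ℕ} (W : Matrix (Fin n) (Fin r) ℝ) (i : Fin n) :
    0 ≤ (W * Wᵀ) i i := by
  simp only [Matrix.mul_apply, Matrix.transpose_apply]
  exact Finset.sum_nonneg fun k _ => mul_self_nonneg _

lemma proj_diag_le_one {n r : ℕ} (W : Matrix (Fin n) (Fin r) ℝ) (hW : Wᵀ * W = 1) (i : Fin n) :
    (W * Wᵀ) i i ≤ 1 := by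
  set P := W * Wᵀ with hP
  have hsymm : Pᵀ = P := by rw [hP, Matrix.transpose_mul, Matrix.transpose_transpose]
  have hidem : P * P = P := by
    rw [hP, Matrix.mul_assoc, ← Matrix.mul_assoc Wᵀ, hW, Matrix.one_mul]
  have h1 : P i i = ∑ j, (P i j)^2 := by
    conv_lhs => rw [← hidem]
    simp only [Matrix.mul_apply]
    refine Finset.sum_congr rfl fun j _ => ?_
    have hji : P j i = P i j := congrFun (congrFun hsymm i) j
    rw [hji]; ring
  have h2 : (P i i)^2 ≤ P i i := by
    conv_rhs => rw [h1]
    exact Finset.single_le_sum (f := fun j => (P i j)^2) (fun j _ => sq_nonneg _) (Finset.mem_univ i)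
  nlinarith [proj_diag_nonneg W i]

lemma threshold {n r : ℕ} (hr1 : 1 ≤ r) (hrn : r ≤ n) (μ w : Fin n → ℝ)
    (hmono : ∀ i j : Fin n, i ≤ j → μ j ≤ μ i)
    (hw0 : ∀ i, 0 ≤ w i) (hw1 : ∀ i, w i ≤ 1)
    (hsum : ∑ i, w i = r)
    (hcard : (univ.filter (fun i : Fin n => (i:ℕ) < r)).card = r) :
    ∑ i, μ i * w i ≤ ∑ i ∈ univ.filter (fun i : Fin n => (i:ℕ) < r), μ i := by
  have hrn' : r - 1 < n := lt_of_lt_of_le (Nat.sub_lt hr1 one_pos) hrn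
  set b : Fin n := ⟨r - 1, hrn'⟩ with hb
  set F := univ.filter (fun i : Fin n => (i:ℕ) < r) with hF
  have hsplit : ∑ i ∈ F, μ i * w i + ∑ i ∈ univ.filter (fun i : Fin n => ¬ (i:ℕ) < r), μ i * w i
      = ∑ i, μ i * w i :=
    Finset.sum_filter_add_sum_filter_not univ _ _
  have hsplitw : ∑ i ∈ F, w i + ∑ i ∈ univ.filter (fun i : Fin n => ¬ (i:ℕ) < r), w i
      = ∑ i, w i :=
    Finset.sum_filter_add_sum_filter_not univ _ _
  have h1 : ∑ i ∈ F, μ i * w i ≤ ∑ i ∈ F, (μ i + μ b * (w i - 1)) := by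
    refine Finset.sum_le_sum fun i hi => ?_
    have hi' : (i:ℕ) < r := by simpa [hF] using hi
    have hib : i ≤ b := by
      rw [Fin.le_def]; simp [hb]; omega
    have := hmono i b hib
    nlinarith [hw1 i]
  have h2 : ∑ i ∈ univ.filter (fun i : Fin n => ¬ (i:ℕ) < r), μ i * w i
      ≤ ∑ i ∈ univ.filter (fun i : Fin n => ¬ (i:ℕ) < r), μ b * w i := by
    refine Finset.sum_le_sum fun i hi => ?_
    have hi' : ¬ (i:ℕ) < r := by simpa using hi
    have hbi : b ≤ i := by rw [Fin.le_def]; simp [hb]; omega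
    exact mul_le_mul_of_nonneg_right (hmono b i hbi) (hw0 i)
  have e1 : ∑ i ∈ F, (μ i + μ b * (w i - 1))
      = ∑ i ∈ F, μ i + μ b * (∑ i ∈ F, w i) - μ b * F.card := by
    rw [Finset.sum_add_distrib]
    simp only [mul_sub, Finset.sum_sub_distrib, ← Finset.mul_sum, Finset.sum_const,
      nsmul_eq_mul, mul_one]
    ring
  have e2 : ∑ i ∈ univ.filter (fun i : Fin n => ¬ (i:ℕ) < r), μ b * w i
      = μ b * ∑ i ∈ univ.filter (fun i : Fin n => ¬ (i:ℕ) < r), w i := by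
    rw [Finset.mul_sum]
  have hcard' : (F.card : ℝ) = r := by rw [hF, hcard]
  have : ∑ i, μ i * w i ≤ ∑ i ∈ F, μ i + μ b * (∑ i, w i) - μ b * r := by
    rw [← hsplit]
    calc ∑ i ∈ F, μ i * w i + ∑ i ∈ univ.filter (fun i : Fin n => ¬ (i:ℕ) < r), μ i * w i
        ≤ (∑ i ∈ F, μ i + μ b * (∑ i ∈ F, w i) - μ b * F.card)
          + μ b * ∑ i ∈ univ.filter (fun i : Fin n => ¬ (i:ℕ) < r), w i := by
          rw [← e1, ← e2]; exact add_le_add h1 h2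
      _ = ∑ i ∈ F, μ i + μ b * (∑ i, w i) - μ b * r := by
          rw [← hsplitw]; rw [hcard']; ring
  rw [hsum] at this
  linarith

lemma card_filter_lt' {n r : ℕ} (hrn : r ≤ n) :
    (univ.filter (fun i : Fin n => (i:ℕ) < r)).card = r := by
  have h : univ.filter (fun i : Fin n => (i:ℕ) < r) = Finset.map (Fin.castLEEmb hrn) univ := by
    ext i
    simp only [Finset.mem_filter, Finset.mem_map, Finset.mem_univ, true_and]
    constructor
    · intro h
      exact ⟨⟨i, h⟩, by simp [Fin.castLEEmb, Fin.castLE]⟩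
    · rintro ⟨k, _, rfl⟩
      simpa [Fin.castLEEmb, Fin.castLE] using k.isLt
  rw [h]
  simp

/-- Eckart–Young for orthogonal projection onto column subspaces.
Given an orthonormal eigenbasis `v` of `Cᵀ C` with eigenvalues `μ` (the squared
singular values of `C`) sorted in decreasing order, the matrix `V` whose columns
are the first `r` eigenvectors minimizes `‖C - C V' V'ᵀ‖_F` over all `V'` with
orthonormal columns, and the minimum equals `√(Σ_{i ≥ r} μ i)`, the square root
of the sum of the squares of the remaining singular values. -/
theorem eckart_young_projection {m n r : ℕ} (hr1 : 1 ≤ r) (hrn : r ≤ n)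
    (C : Matrix (Fin m) (Fin n) ℝ)
    (v : Fin n → Fin n → ℝ) (μ : Fin n → ℝ)
    (heig : ∀ i, (Cᵀ * C).mulVec (v i) = μ i • v i)
    (horth : ∀ i j, (∑ k, v i k * v j k) = if i = j then (1 : ℝ) else 0)
    (hmono : ∀ i j : Fin n, i ≤ j → μ j ≤ μ i)
    (V : Matrix (Fin n) (Fin r) ℝ)
    (hV : V = Matrix.of fun j (i : Fin r) => v (Fin.castLE hrn i) j) :
    (∀ V' : Matrix (Fin n) (Fin r) ℝ, V'ᵀ * V' = 1 →
        frob (C - C * V * Vᵀ) ≤ frob (C - C * V' * V'ᵀ)) ∧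
      frob (C - C * V * Vᵀ)
        = Real.sqrt (∑ i ∈ Finset.univ.filter (fun i : Fin n => r ≤ (i : ℕ)), μ i) := by
  set A := Cᵀ * C with hAdef
  set Q : Matrix (Fin n) (Fin n) ℝ := Matrix.of (fun i j => v j i) with hQdef
  have hQ : Qᵀ * Q = 1 := by
    ext i j
    simp only [Matrix.mul_apply, Matrix.transpose_apply, hQdef, Matrix.of_apply,
      Matrix.one_apply]
    rw [horth i j]
  have hQQ : Q * Qᵀ = 1 := mul_eq_one_comm.mp hQ
  set D := Matrix.diagonal μ with hDdef
  have hAQ : A * Q = Q * D := by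
    ext i j
    have h := congrFun (heig j) i
    simp only [Matrix.mulVec, dotProduct, Pi.smul_apply, smul_eq_mul] at h
    simp only [Matrix.mul_apply, hQdef, Matrix.of_apply, hDdef, Matrix.diagonal,
      Matrix.of_apply, mul_ite, mul_zero]
    rw [Finset.sum_ite_eq' univ j (fun k => v k i * μ k)]
    simpa [mul_comm] using h
  have hA : A = Q * D * Qᵀ := by
    calc A = A * (Q * Qᵀ) := by rw [hQQ, mul_one]
    _ = (A * Q) * Qᵀ := (Matrix.mul_assoc A Q Qᵀ).symm
    _ = Q * D * Qᵀ := by rw [hAQ]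
  have htraceA : Matrix.trace A = ∑ i, μ i := by
    rw [hA, Matrix.trace_mul_comm, ← Matrix.mul_assoc, hQ, Matrix.one_mul, hDdef,
      Matrix.trace_diagonal]
  -- generic computation for any V' with orthonormal columns
  have key : ∀ V' : Matrix (Fin n) (Fin r) ℝ, V'ᵀ * V' = 1 →
      ((Qᵀ * V')ᵀ * (Qᵀ * V') = 1 ∧
       ∑ i, ∑ j, ((C - C * V' * V'ᵀ) i j)^2
          = Matrix.trace A - ∑ i, μ i * ((Qᵀ * V') * (Qᵀ * V')ᵀ) i i) := by
    intro V' hV'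
    set W := Qᵀ * V' with hWdef
    have hW : Wᵀ * W = 1 := by
      rw [hWdef, Matrix.transpose_mul, Matrix.transpose_transpose, Matrix.mul_assoc,
        ← Matrix.mul_assoc Q, hQQ, Matrix.one_mul, hV']
    refine ⟨hW, ?_⟩
    set P := V' * V'ᵀ with hPdef
    have hPsym : Pᵀ = P := by
      rw [hPdef, Matrix.transpose_mul, Matrix.transpose_transpose]
    have hPP : P * P = P := by
      rw [hPdef, Matrix.mul_assoc, ← Matrix.mul_assoc V'ᵀ, hV', Matrix.one_mul]
    have hexp : (C - C * P)ᵀ * (C - C * P)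
        = A - A * P - (P * A - P * (A * P)) := by
      rw [Matrix.transpose_sub, Matrix.transpose_mul, hPsym, Matrix.sub_mul,
        Matrix.mul_sub, Matrix.mul_sub, hAdef]
      simp only [Matrix.mul_assoc]
    have htr : Matrix.trace ((C - C * P)ᵀ * (C - C * P))
        = Matrix.trace A - Matrix.trace (A * P) := by
      rw [hexp, Matrix.trace_sub, Matrix.trace_sub, Matrix.trace_sub]
      have c1 : Matrix.trace (P * A) = Matrix.trace (A * P) := Matrix.trace_mul_comm P A
      have c2 : Matrix.trace (P * (A * P)) = Matrix.trace (A * P) := by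
        rw [Matrix.trace_mul_comm, Matrix.mul_assoc, hPP]
      rw [c1, c2]; ring
    have hAP : Matrix.trace (A * P) = ∑ i, μ i * (W * Wᵀ) i i := by
      have e : A * P = Q * (D * (W * Wᵀ)) * Qᵀ := by
        rw [hA, hPdef, hWdef]
        rw [Matrix.transpose_mul, Matrix.transpose_transpose]
        simp only [Matrix.mul_assoc]
        rw [hQQ, Matrix.mul_one]
      rw [e, Matrix.trace_mul_comm, ← Matrix.mul_assoc, hQ, Matrix.one_mul,
        trace_diag_mul]
    calc ∑ i, ∑ j, ((C - C * V' * V'ᵀ) i j)^2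
        = Matrix.trace ((C - C * P)ᵀ * (C - C * P)) := by
          rw [← sumsq_eq_trace, hPdef, Matrix.mul_assoc]
      _ = Matrix.trace A - ∑ i, μ i * (W * Wᵀ) i i := by rw [htr, hAP]
  -- V has orthonormal columns
  have hVo : Vᵀ * V = 1 := by
    ext k l
    simp only [Matrix.mul_apply, Matrix.transpose_apply, hV, Matrix.of_apply,
      Matrix.one_apply]
    rw [horth]
    simp [Fin.castLE_inj]
  -- diagonal entries of projection for V
  have hWV : ∀ i : Fin n, ((Qᵀ * V) * (Qᵀ * V)ᵀ) i i
      = if (i:ℕ) < r then (1:ℝ) else 0 := by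
    intro i
    have hentry : ∀ k : Fin r, (Qᵀ * V) i k = if i = Fin.castLE hrn k then (1:ℝ) else 0 := by
      intro k
      simp only [Matrix.mul_apply, Matrix.transpose_apply, hQdef, hV, Matrix.of_apply]
      rw [horth]
    have hd : ((Qᵀ * V) * (Qᵀ * V)ᵀ) i i
        = ∑ k, (if i = Fin.castLE hrn k then (1:ℝ) else 0)
            * (if i = Fin.castLE hrn k then (1:ℝ) else 0) := by
      rw [Matrix.mul_apply]
      refine Finset.sum_congr rfl fun k _ => ?_
      rw [Matrix.transpose_apply, hentry k]
    rw [hd]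
    by_cases h : (i:ℕ) < r
    · rw [if_pos h]
      have hiff : ∀ k : Fin r, (i = Fin.castLE hrn k) ↔ (k = ⟨i.1, h⟩) := by
        intro k
        constructor
        · intro he; ext; exact (congrArg Fin.val he).symm
        · rintro rfl; ext; rfl
      simp only [hiff, ite_mul, one_mul, zero_mul]
      simp
    · rw [if_neg h]
      refine Finset.sum_eq_zero fun k _ => ?_
      have hne : i ≠ Fin.castLE hrn k := fun he => h (by rw [he]; exact k.isLt)
      rw [if_neg hne, zero_mul]
  obtain ⟨hWVo, hkeyV⟩ := key V hVo
  have hsumV : ∑ i, μ i * ((Qᵀ * V) * (Qᵀ * V)ᵀ) i i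
      = ∑ i ∈ univ.filter (fun i : Fin n => (i:ℕ) < r), μ i := by
    rw [Finset.sum_filter]
    refine Finset.sum_congr rfl fun i _ => ?_
    rw [hWV i]
    by_cases h : (i:ℕ) < r <;> simp [h]
  have hcard := card_filter_lt' (n := n) hrn
  -- minimum value identity
  have hvalV : ∑ i, ∑ j, ((C - C * V * Vᵀ) i j)^2
      = ∑ i ∈ univ.filter (fun i : Fin n => r ≤ (i:ℕ)), μ i := by
    rw [hkeyV, hsumV, htraceA]
    have hs := Finset.sum_filter_add_sum_filter_not univ (fun i : Fin n => (i:ℕ) < r) μ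
    have : univ.filter (fun i : Fin n => ¬ (i:ℕ) < r)
        = univ.filter (fun i : Fin n => r ≤ (i:ℕ)) := by
      refine Finset.filter_congr fun i _ => ?_
      simp [not_lt]
    rw [this] at hs
    linarith
  constructor
  · intro V' hV'
    obtain ⟨hWo', hkey'⟩ := key V' hV'
    have hth : ∑ i, μ i * ((Qᵀ * V') * (Qᵀ * V')ᵀ) i i
        ≤ ∑ i ∈ univ.filter (fun i : Fin n => (i:ℕ) < r), μ i := by
      refine threshold hr1 hrn μ (fun i => ((Qᵀ * V') * (Qᵀ * V')ᵀ) i i) hmono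
        (fun i => proj_diag_nonneg _ i) (fun i => proj_diag_le_one _ hWo' i) ?_ hcard
      have : ∑ i, ((Qᵀ * V') * (Qᵀ * V')ᵀ) i i = Matrix.trace ((Qᵀ * V') * (Qᵀ * V')ᵀ) := rfl
      rw [this, Matrix.trace_mul_comm, hWo', Matrix.trace_one]
      simp
    unfold frob
    apply Real.sqrt_le_sqrt
    rw [hkeyV, hkey', hsumV]
    linarith
  · unfold frob
    rw [hvalV]
end
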